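/- Under the extension setup (S a based scheme on Z with closed subset T̃, based morphism i: U → S with iπ: U → S//T̃ an isomorphism, and Condition (*): |t(ui)| = 1 for all u ∈ U and t ∈ T̃), for every u ∈ U the valencies satisfy n_{ui} = n_u · n_{T̃''_u}, where T̃''_u = {t ∈ T̃ : (ui)t = {ui}}. -/
import Mathlib


/-!
Common framework for association schemes, following the paper
"A new semidirect product for association schemes".
-/

/-- The diagonal relation `1_X` on a set `X`. -/
def diagRel (X : Type) : Set (X × X) := {w | w.1 = w.2}

/-- The transpose `s*` of a relation. -/
def transp {X : Type} (s : Set (X × X)) : Set (X × X) := Prod.swap '' s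

/-- The structure constant `a_{pqr}`: for `(x,y) ∈ r`, the number of `z` with
`(x,z) ∈ p` and `(z,y) ∈ q` (well-defined for elements of a scheme). -/
noncomputable def aC {X : Type} (p q r : Set (X × X)) : ℕ :=
  sSup {n | ∃ w ∈ r, n = Nat.card {z : X // (w.1, z) ∈ p ∧ (z, w.2) ∈ q}}

/-- `S` is an association scheme on `X`. -/
def IsScheme {X : Type} (S : Set (Set (X × X))) : Prop :=
  (∀ s ∈ S, s.Nonempty) ∧
  (∀ w : X × X, ∃! s, s ∈ S ∧ w ∈ s) ∧
  diagRel X ∈ S ∧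
  (∀ s ∈ S, transp s ∈ S) ∧
  (∀ p ∈ S, ∀ q ∈ S, ∀ r ∈ S, ∀ w ∈ r,
    Nat.card {z : X // (w.1, z) ∈ p ∧ (z, w.2) ∈ q} = aC p q r)

/-- Complex product of two relations relative to a scheme `S`:
`pq = {r ∈ S : a_{pqr} > 0}`. -/
noncomputable def cmulS {X : Type} (S : Set (Set (X × X))) (p q : Set (X × X)) :
    Set (Set (X × X)) :=
  {r | r ∈ S ∧ 0 < aC p q r}

/-- Complex product of two subsets of a scheme. -/
noncomputable def setMulS {X : Type} (S : Set (Set (X × X)))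
    (Pp Qq : Set (Set (X × X))) : Set (Set (X × X)) :=
  ⋃ p ∈ Pp, ⋃ q ∈ Qq, cmulS S p q

/-- `T` is a closed subset of the scheme `S` (i.e. `T ⊆ S` and `T*T ⊆ T`). -/
def IsClosedIn {X : Type} (S T : Set (Set (X × X))) : Prop :=
  T ⊆ S ∧ ∀ p ∈ T, ∀ q ∈ T, cmulS S (transp p) q ⊆ T

/-- `T` is a normal subset of the scheme `S` (i.e. `pT = Tp` for all `p ∈ S`). -/
noncomputable def IsNormalIn {X : Type} (S T : Set (Set (X × X))) : Prop :=
  ∀ p ∈ S, setMulS S {p} T = setMulS S T {p}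

/-- `xs = {y : (x,y) ∈ s}`. -/
def pimg {X : Type} (s : Set (X × X)) (x : X) : Set X := {y | (x, y) ∈ s}

/-- The coset `xT` of a (closed) subset `T` of a scheme. -/
def coset {X : Type} (T : Set (Set (X × X))) (x : X) : Set X :=
  {y | ∃ t ∈ T, (x, y) ∈ t}

/-- The set `X/T` of cosets. -/
def cosets {X : Type} (T : Set (Set (X × X))) : Set (Set X) :=
  {C | ∃ x, C = coset T x}

/-- The quotient relation `s^T` on cosets. -/
def quotRel {X : Type} (T : Set (Set (X × X))) (s : Set (X × X)) :
    Set (Set X × Set X) :=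
  {w | ∃ x₁ x₂, w = (coset T x₁, coset T x₂) ∧
    ∃ p ∈ s, p.1 ∈ coset T x₁ ∧ p.2 ∈ coset T x₂}

/-- The relations of the quotient scheme `S//T`. -/
def quotS {X : Type} (S T : Set (Set (X × X))) : Set (Set (Set X × Set X)) :=
  {r | ∃ s ∈ S, r = quotRel T s}

/-- A presentation of a (based) scheme: a set of points inside an ambient type,
a set of relations, and a basepoint. -/
structure Pres (P : Type) where
  pts : Set P
  rels : Set (Set (P × P))
  base : P

/-- A scheme `S` on the whole of `X`, based at `x0`, as a presentation. -/
def fullPres {X : Type} (S : Set (Set (X × X))) (x0 : X) : Pres X :=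
  ⟨Set.univ, S, x0⟩

/-- The quotient scheme `S//T` on `X/T`, based at `x0 T`, as a presentation. -/
def quotPres {X : Type} (S T : Set (Set (X × X))) (x0 : X) : Pres (Set X) :=
  ⟨cosets T, quotS S T, coset T x0⟩

/-- The subscheme of a scheme defined by the coset `xT` of a closed subset `T`,
as a presentation. -/
def subPres {X : Type} (T : Set (Set (X × X))) (x : X) : Pres X :=
  ⟨coset T x, {r | ∃ t ∈ T, r = t ∩ (coset T x ×ˢ coset T x)}, x⟩

/-- `f` is a morphism of schemes between two presentations: it maps points to
points, and pairs lying in the same relation to pairs lying in the same relation. -/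
def IsMorOn {P Q : Type} (A : Pres P) (B : Pres Q) (f : P → Q) : Prop :=
  Set.MapsTo f A.pts B.pts ∧
  ∀ s ∈ A.rels, ∀ w ∈ s, ∀ w' ∈ s,
    ∃ t ∈ B.rels, (f w.1, f w.2) ∈ t ∧ (f w'.1, f w'.2) ∈ t

/-- The induced map on scheme elements sends `s` to `t` (i.e. `s φ_S = t`):
every pair of `s` is mapped into `t`. -/
def elemMapsTo {P Q : Type} (f : P → Q) (s : Set (P × P)) (t : Set (Q × Q)) : Prop :=
  ∀ w ∈ s, (f w.1, f w.2) ∈ t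

/-- `f` is an isomorphism of schemes: a morphism which is bijective on points and
whose induced map on scheme elements is bijective. -/
def IsIsoOn {P Q : Type} (A : Pres P) (B : Pres Q) (f : P → Q) : Prop :=
  IsMorOn A B f ∧ Set.BijOn f A.pts B.pts ∧
  ∀ t ∈ B.rels, ∃! s, s ∈ A.rels ∧ elemMapsTo f s t

/-- A based isomorphism of schemes. -/
def IsBasedIsoOn {P Q : Type} (A : Pres P) (B : Pres Q) (f : P → Q) : Prop :=
  IsIsoOn A B f ∧ f A.base = B.base

/-- A based association scheme on a finite based set. -/
structure BScheme : Type 1 where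
  X : Type
  fin : Fintype X
  base : X
  S : Set (Set (X × X))
  isScheme : IsScheme S

/-- A morphism in the category 𝒞: a normal closed subset on each side together
with a based isomorphism between the corresponding quotient schemes. -/
structure HomC (A B : BScheme) where
  TN : Set (Set (A.X × A.X))
  UN : Set (Set (B.X × B.X))
  TN_cl : IsClosedIn A.S TN
  TN_n : IsNormalIn A.S TN
  UN_cl : IsClosedIn B.S UN
  UN_n : IsNormalIn B.S UN
  f : Set A.X → Set B.X
  iso : IsBasedIsoOn (quotPres A.S TN A.base) (quotPres B.S UN B.base) f

/-- `t^{T_φ} φ̃ = u^{U_φ}`: the induced map on quotient scheme elements sends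
the class of `t` to the class of `u`. -/
def elemRel {A B : BScheme} (φ : HomC A B) (t : Set (A.X × A.X))
    (u : Set (B.X × B.X)) : Prop :=
  elemMapsTo φ.f (quotRel φ.TN t) (quotRel φ.UN u)

/-- The normal closed subset `T_{φψ}` of the composite. -/
def Tcomp {A B C : BScheme} (φ : HomC A B) (ψ : HomC B C) :
    Set (Set (A.X × A.X)) :=
  {t | t ∈ A.S ∧ ∃ u ∈ B.S, elemRel φ t u ∧ elemRel ψ u (diagRel C.X)}

/-- The normal closed subset `V_{φψ}` of the composite. -/
def Vcomp {A B C : BScheme} (φ : HomC A B) (ψ : HomC B C) :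
    Set (Set (C.X × C.X)) :=
  {v | v ∈ C.S ∧ ∃ u ∈ B.S, elemRel φ (diagRel A.X) u ∧ elemRel ψ u v}

/-- `ρ` is a composite of `φ` and `ψ` in the category 𝒞. -/
def IsComposite {A B C : BScheme} (φ : HomC A B) (ψ : HomC B C) (ρ : HomC A C) : Prop :=
  ρ.TN = Tcomp φ ψ ∧ ρ.UN = Vcomp φ ψ ∧
  ∀ (x : A.X) (y : B.X) (z : C.X),
    φ.f (coset φ.TN x) = coset φ.UN y →
    ψ.f (coset ψ.TN y) = coset ψ.UN z →
    ρ.f (coset (Tcomp φ ψ) x) = coset (Vcomp φ ψ) z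

/-- The identity morphism of 𝒞 at `A`: both normal closed subsets are `{1_X}`
and the isomorphism is the identity of `A//{1_X}`. -/
def IsIdHom {A : BScheme} (ι : HomC A A) : Prop :=
  ι.TN = {diagRel A.X} ∧ ι.UN = {diagRel A.X} ∧
  ∀ x : A.X, ι.f (coset {diagRel A.X} x) = coset {diagRel A.X} x

/-- A `τ_T`-scheme on the based set underlying `T`. -/
structure TauSchemeOn (T : BScheme) where
  rels : Set (Set (T.X × T.X))
  isScheme : IsScheme rels
  alpha : Set (T.X × T.X) → Set (T.X × T.X)
  alpha_bij : Set.BijOn alpha T.S rels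
  alpha_one : alpha (diagRel T.X) = diagRel T.X
  alpha_star : ∀ p ∈ T.S, alpha (transp p) = transp (alpha p)
  alpha_const : ∀ p ∈ T.S, ∀ q ∈ T.S, ∀ r ∈ T.S,
    aC p q r = aC (alpha p) (alpha q) (alpha r)

/-- The based scheme underlying a `τ`-scheme. -/
abbrev TauSchemeOn.toB {T : BScheme} (Z : TauSchemeOn T) : BScheme :=
  ⟨T.X, T.fin, T.base, Z.rels, Z.isScheme⟩

/-- An action `ζ` of a based scheme `U` on a based scheme `T`. -/
structure SchemeAction (U T : BScheme) where
  /-- the `τ`-scheme `ζ_y = (T_y, α^y)` for each `y ∈ Y` -/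
  Z : U.X → TauSchemeOn T
  /-- the morphism `ζ_{y₁}^{y₂} ∈ Hom_𝒞(T_{y₁}, T_{y₂})` -/
  hom : ∀ y1 y2 : U.X, HomC (Z y1).toB (Z y2).toB
  /-- (1) `T_{y*} = T` -/
  base_rels : (Z U.base).rels = T.S
  /-- (1) `α^{y*} = id` -/
  base_alpha : ∀ p, (Z U.base).alpha p = p
  /-- (2) `ζ_y^y` is the identity morphism -/
  hom_refl_TN : ∀ y : U.X, (hom y y).TN = {diagRel T.X}
  hom_refl_UN : ∀ y : U.X, (hom y y).UN = {diagRel T.X}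
  hom_refl_f : ∀ (y : U.X) (x : T.X),
    (hom y y).f (coset {diagRel T.X} x) = coset {diagRel T.X} x
  /-- (3) `ζ_{y₂}^{y₁} = (ζ_{y₁}^{y₂})*` -/
  hom_symm_TN : ∀ y1 y2 : U.X, (hom y2 y1).TN = (hom y1 y2).UN
  hom_symm_UN : ∀ y1 y2 : U.X, (hom y2 y1).UN = (hom y1 y2).TN
  hom_symm_f : ∀ y1 y2 : U.X,
    Set.InvOn (hom y2 y1).f (hom y1 y2).f
      (cosets (hom y1 y2).TN) (cosets (hom y1 y2).UN)
  /-- (4) `ζ_{y₁}^{y₂}(τ)` depends only on the element `u ∈ U` containing `(y₁,y₂)` -/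
  zeta_welldef : ∀ u ∈ U.S, ∀ y1 y2 y1' y2' : U.X, (y1, y2) ∈ u → (y1', y2') ∈ u →
    ∀ Pp : Set (Set (T.X × T.X)),
      {u' | u' ∈ T.S ∧ ∃ t ∈ Pp,
        elemRel (hom y1 y2) ((Z y1).alpha t) ((Z y2).alpha u')} =
      {u' | u' ∈ T.S ∧ ∃ t ∈ Pp,
        elemRel (hom y1' y2') ((Z y1').alpha t) ((Z y2').alpha u')}
  /-- (5) `ζ_{y₁}^{y₃} ≤ ζ_{y₁}^{y₂} ζ_{y₂}^{y₃}` -/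
  le_comp : ∀ y1 y2 y3 : U.X,
    (hom y1 y3).TN ⊆ Tcomp (hom y1 y2) (hom y2 y3) ∧
    (hom y1 y3).UN ⊆ Vcomp (hom y1 y2) (hom y2 y3) ∧
    ∀ x x2 x3 : T.X,
      (hom y1 y2).f (coset (hom y1 y2).TN x) = coset (hom y1 y2).UN x2 →
      (hom y2 y3).f (coset (hom y2 y3).TN x2) = coset (hom y2 y3).UN x3 →
      (hom y1 y3).f (coset (hom y1 y3).TN x) ⊆
        coset (Vcomp (hom y1 y2) (hom y2 y3)) x3

/-- The map `ζ_u` on subsets of `τ` induced by any `(y₁,y₂) ∈ u`. -/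
def SchemeAction.zetaU {U T : BScheme} (act : SchemeAction U T)
    (u : Set (U.X × U.X)) (Pp : Set (Set (T.X × T.X))) : Set (Set (T.X × T.X)) :=
  {u' | ∃ y1 y2 : U.X, (y1, y2) ∈ u ∧ u' ∈ T.S ∧
    ∃ t ∈ Pp, elemRel (act.hom y1 y2) ((act.Z y1).alpha t) ((act.Z y2).alpha u')}

/-- The relation `[u,t]` on `Y × X`. -/
def SchemeAction.rel {U T : BScheme} (act : SchemeAction U T)
    (u : Set (U.X × U.X)) (t : Set (T.X × T.X)) :
    Set ((U.X × T.X) × (U.X × T.X)) :=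
  {w | (w.1.1, w.2.1) ∈ u ∧
    ((act.hom w.1.1 w.2.1).f (coset (act.hom w.1.1 w.2.1).TN w.1.2),
      coset (act.hom w.1.1 w.2.1).UN w.2.2) ∈
      quotRel (act.hom w.1.1 w.2.1).UN ((act.Z w.2.1).alpha t)}

/-- The semidirect product `U ⋉_ζ T` as a set of relations on `Y × X`. -/
def SchemeAction.sdp {U T : BScheme} (act : SchemeAction U T) :
    Set (Set ((U.X × T.X) × (U.X × T.X))) :=
  {r | ∃ u ∈ U.S, ∃ t ∈ T.S, r = act.rel u t}

/-- The valency `n_s = a_{s s* 1}` of a relation. -/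
noncomputable def nval {X : Type} (s : Set (X × X)) : ℕ :=
  aC s (transp s) (diagRel X)

section Helpers

variable {X : Type}

lemma mem_transp {s : Set (X × X)} {x y : X} : (x, y) ∈ transp s ↔ (y, x) ∈ s := by
  constructor
  · rintro ⟨⟨a, b⟩, hab, h⟩
    obtain ⟨rfl, rfl⟩ : b = x ∧ a = y := by
      simpa [Prod.ext_iff] using h
    exact hab
  · intro h; exact ⟨(y, x), h, rfl⟩

lemma transp_transp (s : Set (X × X)) : transp (transp s) = s := by
  ext ⟨x, y⟩; simp [mem_transp]

lemma mem_diagRel {x y : X} : (x, y) ∈ diagRel X ↔ x = y := Iff.rfl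

variable {S : Set (Set (X × X))}

lemma scheme_unique (hS : IsScheme S) {p q : Set (X × X)} (hp : p ∈ S) (hq : q ∈ S)
    {w : X × X} (hwp : w ∈ p) (hwq : w ∈ q) : p = q := by
  obtain ⟨-, h2, -⟩ := hS
  obtain ⟨r, -, hr⟩ := h2 w
  exact (hr p ⟨hp, hwp⟩).trans (hr q ⟨hq, hwq⟩).symm

lemma scheme_exists (hS : IsScheme S) (w : X × X) : ∃ s ∈ S, w ∈ s := by
  obtain ⟨-, h2, -⟩ := hS
  obtain ⟨r, hr, -⟩ := h2 w
  exact ⟨r, hr.1, hr.2⟩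

lemma card_eq_aC [Finite X] (hS : IsScheme S) {p q r : Set (X × X)}
    (hp : p ∈ S) (hq : q ∈ S) (hr : r ∈ S) {x y : X} (hxy : (x, y) ∈ r) :
    Nat.card {z : X // (x, z) ∈ p ∧ (z, y) ∈ q} = aC p q r := by
  obtain ⟨-, -, -, -, h5⟩ := hS
  exact h5 p hp q hq r hr (x, y) hxy

lemma aC_pos_of_triangle [Finite X] (hS : IsScheme S) {p q r : Set (X × X)}
    (hp : p ∈ S) (hq : q ∈ S) (hr : r ∈ S) {x y z : X}
    (hxy : (x, y) ∈ r) (hxz : (x, z) ∈ p) (hzy : (z, y) ∈ q) : 0 < aC p q r := by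
  rw [← card_eq_aC hS hp hq hr hxy]
  have : Nonempty {z' : X // (x, z') ∈ p ∧ (z', y) ∈ q} := ⟨⟨z, hxz, hzy⟩⟩
  exact Nat.card_pos

lemma triangle_of_aC_pos [Finite X] (hS : IsScheme S) {p q r : Set (X × X)}
    (hp : p ∈ S) (hq : q ∈ S) (hr : r ∈ S) (hpos : 0 < aC p q r) {x y : X}
    (hxy : (x, y) ∈ r) : ∃ z, (x, z) ∈ p ∧ (z, y) ∈ q := by
  rw [← card_eq_aC hS hp hq hr hxy] at hpos
  obtain ⟨⟨z, hz⟩⟩ := Nat.card_pos_iff.mp hpos |>.1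
  exact ⟨z, hz⟩

lemma mem_cmulS {p q r : Set (X × X)} : r ∈ cmulS S p q ↔ r ∈ S ∧ 0 < aC p q r :=
  Iff.rfl

lemma cmulS_transp [Finite X] (hS : IsScheme S) {p q r : Set (X × X)}
    (hp : p ∈ S) (hq : q ∈ S) (h : r ∈ cmulS S p q) :
    transp r ∈ cmulS S (transp q) (transp p) := by
  obtain ⟨hrS, hpos⟩ := h
  obtain ⟨w, hw⟩ := hS.1 r hrS
  obtain ⟨z, hz1, hz2⟩ := triangle_of_aC_pos hS hp hq hrS hpos hw
  refine ⟨hS.2.2.2.1 r hrS, aC_pos_of_triangle hS (hS.2.2.2.1 q hq) (hS.2.2.2.1 p hp)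
    (hS.2.2.2.1 r hrS) (mem_transp.mpr hw) (mem_transp.mpr hz2) (mem_transp.mpr hz1)⟩

/-- valency as the cardinality of a point-image -/
lemma ncard_pimg [Finite X] (hS : IsScheme S) {s : Set (X × X)} (hs : s ∈ S) (x : X) :
    (pimg s x).ncard = nval s := by
  have hd : (x, x) ∈ diagRel X := rfl
  have := card_eq_aC hS hs (hS.2.2.2.1 s hs) hS.2.2.1 hd
  rw [show nval s = aC s (transp s) (diagRel X) from rfl, ← this,
    ← Nat.card_coe_set_eq]
  apply Nat.card_congr
  apply Equiv.subtypeEquivRight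
  intro z
  simp only [pimg, Set.mem_setOf_eq, mem_transp]
  tauto

end Helpers
section ClosedHelpers

variable {X : Type} [Finite X] {S T : Set (Set (X × X))}

lemma diag_mem_closed (hS : IsScheme S) (hT : IsClosedIn S T) (hne : T.Nonempty) :
    diagRel X ∈ T := by
  obtain ⟨t, ht⟩ := hne
  obtain ⟨⟨x, y⟩, hxy⟩ := hS.1 t (hT.1 ht)
  apply hT.2 t ht t ht
  exact ⟨hS.2.2.1, aC_pos_of_triangle hS (hS.2.2.2.1 t (hT.1 ht)) (hT.1 ht) hS.2.2.1
    (show (y, y) ∈ diagRel X from rfl) (mem_transp.mpr hxy) hxy⟩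

lemma transp_mem_closed (hS : IsScheme S) (hT : IsClosedIn S T) (hne : T.Nonempty)
    {t : Set (X × X)} (ht : t ∈ T) : transp t ∈ T := by
  obtain ⟨⟨x, y⟩, hxy⟩ := hS.1 t (hT.1 ht)
  apply hT.2 t ht (diagRel X) (diag_mem_closed hS hT hne)
  exact ⟨hS.2.2.2.1 t (hT.1 ht), aC_pos_of_triangle hS (hS.2.2.2.1 t (hT.1 ht))
    hS.2.2.1 (hS.2.2.2.1 t (hT.1 ht)) (mem_transp.mpr hxy) (mem_transp.mpr hxy) rfl⟩

lemma cmul_sub_closed (hS : IsScheme S) (hT : IsClosedIn S T) (hne : T.Nonempty)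
    {t1 t2 : Set (X × X)} (h1 : t1 ∈ T) (h2 : t2 ∈ T) : cmulS S t1 t2 ⊆ T := by
  have := hT.2 (transp t1) (transp_mem_closed hS hT hne h1) t2 h2
  rwa [transp_transp] at this

lemma mem_coset_self (hS : IsScheme S) (hT : IsClosedIn S T) (hne : T.Nonempty) (x : X) :
    x ∈ coset T x :=
  ⟨diagRel X, diag_mem_closed hS hT hne, rfl⟩

lemma coset_eq_of_rel (hS : IsScheme S) (hT : IsClosedIn S T) (hne : T.Nonempty)
    {x y : X} {t : Set (X × X)} (ht : t ∈ T) (hxy : (x, y) ∈ t) :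
    coset T x = coset T y := by
  have key : ∀ x' y' : X, ∀ t' ∈ T, (x', y') ∈ t' → coset T y' ⊆ coset T x' := by
    intro x' y' t' ht' hxy' b hb
    obtain ⟨t2, ht2, hyb⟩ := hb
    obtain ⟨r, hrS, hrb⟩ := scheme_exists hS (x', b)
    refine ⟨r, cmul_sub_closed hS hT hne ht' ht2 ⟨hrS,
      aC_pos_of_triangle hS (hT.1 ht') (hT.1 ht2) hrS hrb hxy' hyb⟩, hrb⟩
  apply Set.Subset.antisymm
  · exact key y x (transp t) (transp_mem_closed hS hT hne ht) (mem_transp.mpr hxy)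
  · exact key x y t ht hxy

lemma coset_eq_of_mem (hS : IsScheme S) (hT : IsClosedIn S T) (hne : T.Nonempty)
    {x y : X} (h : y ∈ coset T x) : coset T x = coset T y := by
  obtain ⟨t, ht, hxy⟩ := h
  exact coset_eq_of_rel hS hT hne ht hxy

lemma coset_eq_of_inter (hS : IsScheme S) (hT : IsClosedIn S T) (hne : T.Nonempty)
    {x y a : X} (hx : a ∈ coset T x) (hy : a ∈ coset T y) :
    coset T x = coset T y := by
  rw [coset_eq_of_mem hS hT hne hx, coset_eq_of_mem hS hT hne hy]

end ClosedHelpers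

section CountHelper

lemma ncard_biUnion_disj {ι α : Type} [Finite α] (F : Finset ι) (f : ι → Set α)
    (hdisj : ∀ i ∈ F, ∀ j ∈ F, i ≠ j → Disjoint (f i) (f j)) :
    (⋃ i ∈ F, f i).ncard = ∑ i ∈ F, (f i).ncard := by
  classical
  induction F using Finset.induction_on with
  | empty => simp
  | @insert a s hni ih =>
    rw [Finset.sum_insert hni]
    have hU : (⋃ i ∈ insert a s, f i) = f a ∪ ⋃ i ∈ s, f i := by
      simp [Set.biUnion_insert]
    rw [hU, Set.ncard_union_eq, ih]
    · intro i hi j hj hij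
      exact hdisj i (Finset.mem_insert_of_mem hi) j (Finset.mem_insert_of_mem hj) hij
    · apply Set.disjoint_iUnion_right.mpr
      intro i
      apply Set.disjoint_iUnion_right.mpr
      intro hi
      exact hdisj a (Finset.mem_insert_self a s) i (Finset.mem_insert_of_mem hi)
        (fun h => hni (h ▸ hi))

end CountHelper
theorem stmt13
    (T U Sch : BScheme) (Tt : Set (Set (Sch.X × Sch.X)))
    (hTt : IsClosedIn Sch.S Tt)
    (hsub : ∃ g : Sch.X → T.X,
      IsBasedIsoOn (subPres Tt Sch.base) (fullPres T.S T.base) g)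
    (i : U.X → Sch.X)
    (himor : IsMorOn (fullPres U.S U.base) (fullPres Sch.S Sch.base) i)
    (hibase : i U.base = Sch.base)
    (hipi : IsBasedIsoOn (fullPres U.S U.base) (quotPres Sch.S Tt Sch.base)
      (fun y => coset Tt (i y)))
    (iS : Set (U.X × U.X) → Set (Sch.X × Sch.X))
    (hiS : ∀ u ∈ U.S, iS u ∈ Sch.S ∧ elemMapsTo i u (iS u))
    (hcond : ∀ u ∈ U.S, ∀ t ∈ Tt, ∃! s, s ∈ cmulS Sch.S t (iS u)) :
    ∀ u ∈ U.S,
      nval (iS u) =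
        nval u * ∑ᶠ t ∈ {t | t ∈ Tt ∧ cmulS Sch.S (iS u) t = {iS u}}, nval t := by
  classical
  haveI := Sch.fin
  haveI := U.fin
  have hS := Sch.isScheme
  have hU := U.isScheme
  intro u hu
  -- Tt is nonempty
  have hTne : Tt.Nonempty := by
    obtain ⟨g, ⟨⟨-, gbij, -⟩, -⟩⟩ := hsub
    obtain ⟨a, ha, -⟩ := gbij.2.2 (Set.mem_univ T.base)
    obtain ⟨t, ht, -⟩ := ha
    exact ⟨t, ht⟩
  set s := iS u with hs_def
  obtain ⟨hsS, hmap⟩ := hiS u hu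
  have hune : u.Nonempty := hU.1 u hu
  have hutS : transp u ∈ U.S := hU.2.2.2.1 u hu
  obtain ⟨hutS', hmapt⟩ := hiS (transp u) hutS
  have hiSt : iS (transp u) = transp s := by
    obtain ⟨⟨a, b⟩, hab⟩ := hune
    have h1 : (i b, i a) ∈ iS (transp u) := hmapt (b, a) (mem_transp.mpr hab)
    have h2 : (i b, i a) ∈ transp s := mem_transp.mpr (hmap (a, b) hab)
    exact scheme_unique hS hutS' (hS.2.2.2.1 s hsS) h1 h2
  -- the complex product (ui)t has at most one element
  have hsingle : ∀ t ∈ Tt, ∀ r1 ∈ cmulS Sch.S s t, ∀ r2 ∈ cmulS Sch.S s t, r1 = r2 := by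
    intro t ht r1 h1 r2 h2
    have htS := hTt.1 ht
    have htt : transp t ∈ Tt := transp_mem_closed hS hTt hTne ht
    have e1 := cmulS_transp hS hsS htS h1
    have e2 := cmulS_transp hS hsS htS h2
    rw [← hiSt] at e1 e2
    obtain ⟨w, -, huniq⟩ := hcond (transp u) hutS (transp t) htt
    have h3 : transp r1 = transp r2 := (huniq _ e1).trans (huniq _ e2).symm
    have h4 := congrArg transp h3
    rwa [transp_transp, transp_transp] at h4
  set Tset := {t | t ∈ Tt ∧ cmulS Sch.S s t = {s}} with hTset_def
  -- characterization of membership in Tset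
  have hT'' : ∀ t ∈ Tt, 0 < aC s t s → cmulS Sch.S s t = {s} := by
    intro t ht hpos
    have hmem : s ∈ cmulS Sch.S s t := ⟨hsS, hpos⟩
    exact Set.eq_singleton_iff_unique_mem.mpr
      ⟨hmem, fun r hr => hsingle t ht r hr s hmem⟩
  -- fibers of the image set over cosets
  have hCy : ∀ y, (U.base, y) ∈ u →
      pimg s (i U.base) ∩ coset Tt (i y) = ⋃ t ∈ Tset, pimg t (i y) := by
    intro y hy
    have hzy : (i U.base, i y) ∈ s := hmap (U.base, y) hy
    ext w
    constructor
    · rintro ⟨hwA, t, ht, hivw⟩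
      have hpos : 0 < aC s t s :=
        aC_pos_of_triangle hS hsS (hTt.1 ht) hsS hwA hzy hivw
      exact Set.mem_biUnion ⟨ht, hT'' t ht hpos⟩ hivw
    · intro hw
      obtain ⟨t, htT, hivw⟩ := Set.mem_iUnion₂.mp hw
      obtain ⟨ht, hts⟩ := htT
      obtain ⟨r, hrS, hrw⟩ := scheme_exists hS (i U.base, w)
      have hmem : r ∈ cmulS Sch.S s t :=
        ⟨hrS, aC_pos_of_triangle hS hsS (hTt.1 ht) hrS hrw hzy hivw⟩
      rw [hts] at hmem
      exact ⟨hmem ▸ hrw, t, ht, hivw⟩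
  obtain ⟨⟨-, fbij, funiq⟩, -⟩ := hipi
  -- every point of the image set lies in a coset (i y) with y in (U.base)u
  have hcover : ∀ w, (i U.base, w) ∈ s → ∃ y, (U.base, y) ∈ u ∧ w ∈ coset Tt (i y) := by
    intro w hw
    have hcw : coset Tt w ∈ (quotPres Sch.S Tt Sch.base).pts := ⟨w, rfl⟩
    obtain ⟨y, -, hy⟩ := fbij.2.2 hcw
    have hwcy : w ∈ coset Tt (i y) := by
      show w ∈ (fun y => coset Tt (i y)) y
      rw [hy]
      exact mem_coset_self hS hTt hTne w
    obtain ⟨t0, ht0, hiyw⟩ := id hwcy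
    obtain ⟨u', hu'U, hu'mem⟩ := scheme_exists hU (U.base, y)
    obtain ⟨hu'S, hmap'⟩ := hiS u' hu'U
    have h1 : (i U.base, i y) ∈ iS u' := hmap' (U.base, y) hu'mem
    have hpos : 0 < aC s (transp t0) (iS u') :=
      aC_pos_of_triangle hS hsS (hS.2.2.2.1 t0 (hTt.1 ht0)) hu'S h1 hw
        (mem_transp.mpr hiyw)
    have hq : quotRel Tt s ∈ (quotPres Sch.S Tt Sch.base).rels := ⟨s, hsS, rfl⟩
    have hm1 : elemMapsTo (fun y => coset Tt (i y)) u (quotRel Tt s) := by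
      rintro ⟨a, b⟩ hab
      exact ⟨i a, i b, rfl, (i a, i b), hmap (a, b) hab,
        mem_coset_self hS hTt hTne _, mem_coset_self hS hTt hTne _⟩
    have hm2 : elemMapsTo (fun y => coset Tt (i y)) u' (quotRel Tt s) := by
      rintro ⟨a, b⟩ hab
      obtain ⟨v, hv1, hv2⟩ := triangle_of_aC_pos hS hsS
        (hS.2.2.2.1 t0 (hTt.1 ht0)) hu'S hpos (hmap' (a, b) hab)
      exact ⟨i a, i b, rfl, (i a, v), hv1, mem_coset_self hS hTt hTne _,
        t0, ht0, mem_transp.mp hv2⟩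
    obtain ⟨w', -, huniq⟩ := funiq (quotRel Tt s) hq
    have heq : u = u' := (huniq u ⟨hu, hm1⟩).trans (huniq u' ⟨hu'U, hm2⟩).symm
    exact ⟨y, heq ▸ hu'mem, hwcy⟩
  -- finiteness and finsets
  have hfin : Tset.Finite := Set.toFinite _
  set F : Finset (Set (Sch.X × Sch.X)) := hfin.toFinset with hF_def
  have hBfin : (pimg u U.base).Finite := Set.toFinite _
  set FB : Finset U.X := hBfin.toFinset with hFB_def
  have hA : (pimg s (i U.base)).ncard = nval s := ncard_pimg hS hsS _
  have hB : (pimg u U.base).ncard = nval u := ncard_pimg hU hu _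
  set N := ∑ᶠ t ∈ Tset, nval t with hN_def
  have hcoverEq : pimg s (i U.base) =
      ⋃ y ∈ FB, (pimg s (i U.base) ∩ coset Tt (i y)) := by
    ext w
    constructor
    · intro hw
      obtain ⟨y, hyB, hwc⟩ := hcover w hw
      exact Set.mem_biUnion (hBfin.mem_toFinset.mpr hyB) ⟨hw, hwc⟩
    · intro hw
      obtain ⟨y, -, hw', -⟩ := Set.mem_iUnion₂.mp hw
      exact hw'
  have hdisj : ∀ y ∈ FB, ∀ y' ∈ FB, y ≠ y' →
      Disjoint (pimg s (i U.base) ∩ coset Tt (i y))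
        (pimg s (i U.base) ∩ coset Tt (i y')) := by
    intro y _hy y' _hy' hne
    rw [Set.disjoint_left]
    rintro a ⟨-, ha⟩ ⟨-, ha'⟩
    have hcc : coset Tt (i y) = coset Tt (i y') :=
      coset_eq_of_inter hS hTt hTne ha ha'
    exact hne (fbij.2.1 (Set.mem_univ y) (Set.mem_univ y') hcc)
  have hterm : ∀ y ∈ FB,
      (pimg s (i U.base) ∩ coset Tt (i y)).ncard = N := by
    intro y hy
    have hyu : (U.base, y) ∈ u := hBfin.mem_toFinset.mp hy
    rw [hCy y hyu]
    have hUU : (⋃ t ∈ Tset, pimg t (i y)) = ⋃ t ∈ F, pimg t (i y) := by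
      simp only [hF_def, Set.Finite.mem_toFinset]
    have hdisjT : ∀ t1 ∈ F, ∀ t2 ∈ F, t1 ≠ t2 →
        Disjoint (pimg t1 (i y)) (pimg t2 (i y)) := by
      intro t1 h1 t2 h2 hne12
      rw [Set.disjoint_left]
      intro a ha1 ha2
      exact hne12 (scheme_unique hS (hTt.1 (hfin.mem_toFinset.mp h1).1)
        (hTt.1 (hfin.mem_toFinset.mp h2).1) ha1 ha2)
    rw [hUU, ncard_biUnion_disj F _ hdisjT, hN_def, ← hfin.coe_toFinset,
      finsum_mem_coe_finset]
    apply Finset.sum_congr rfl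
    intro t ht
    exact ncard_pimg hS (hTt.1 (hfin.mem_toFinset.mp ht).1) (i y)
  calc nval s = (pimg s (i U.base)).ncard := hA.symm
    _ = (⋃ y ∈ FB, (pimg s (i U.base) ∩ coset Tt (i y))).ncard := by
        rw [← hcoverEq]
    _ = ∑ y ∈ FB, (pimg s (i U.base) ∩ coset Tt (i y)).ncard :=
        ncard_biUnion_disj FB _ hdisj
    _ = ∑ _y ∈ FB, N := Finset.sum_congr rfl hterm
    _ = FB.card * N := by rw [Finset.sum_const, smul_eq_mul]
    _ = nval u * N := by
        rw [← hB, Set.ncard_eq_toFinset_card _ hBfin]
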